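/- arXiv:1202.2054 — 2 statements merged into one kernel-verified Lean document; each statement's English description precedes it below -/
import Mathlib

section
/- Let g : [0,∞) → ℝ be (α,m)-convex with (α,m) ∈ (0,1]², let f : [0,∞) → ℝ be (g-(α,m))-convex dominated, and let 0 ≤ a < b with f, g integrable on [a,b] and [a/m, b/m]. Then |(1/(b-a)) ∫_a^b [f(x) + m(2^α − 1) f(x/m)]/2^α dx − f((a+b)/2)| ≤ (1/(b-a)) ∫_a^b [g(x) + m(2^α − 1) g(x/m)]/2^α dx − g((a+b)/2). -/
/-- `h` is `(α,m)`-convex on `[0,∞)`. -/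
def AMConvex (α m : ℝ) (h : ℝ → ℝ) : Prop :=
  ∀ x, 0 ≤ x → ∀ y, 0 ≤ y → ∀ t ∈ Set.Icc (0:ℝ) 1,
    h (t * x + m * (1 - t) * y) ≤ t ^ α * h x + m * (1 - t ^ α) * h y

/-- `f` is `(g-(α,m))`-convex dominated on `[0,∞)`. -/
def AMDominated (α m : ℝ) (g f : ℝ → ℝ) : Prop :=
  ∀ x, 0 ≤ x → ∀ y, 0 ≤ y → ∀ t ∈ Set.Icc (0:ℝ) 1,
    |t ^ α * f x + m * (1 - t ^ α) * f y - f (t * x + m * (1 - t) * y)| ≤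
      t ^ α * g x + m * (1 - t ^ α) * g y - g (t * x + m * (1 - t) * y)

/-
Taking `t = 1/2`, `y = (a + b - x)/m` in the domination inequality bounds
`|(f x + m(2^α - 1) f((a + b - x)/m))/2^α - f((a + b)/2)|` by the same expression in `g`,
for every `x ∈ [a, b]`. Integrating over `[a, b]`, the reflection `x ↦ a + b - x` turns the
integral of `f((a + b - x)/m)` into that of `f(x/m)`, and the triangle inequality for integrals
gives the claim.
-/

open MeasureTheory Set

lemma AMDominated.abs_midpoint_sub_le {α m : ℝ} {g f : ℝ → ℝ} (hf : AMDominated α m g f)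
    (hm : 0 < m) {x y : ℝ} (hx : 0 ≤ x) (hy : 0 ≤ y) :
    |(f x + m * (2 ^ α - 1) * f (y / m)) / 2 ^ α - f ((x + y) / 2)| ≤
      (g x + m * (2 ^ α - 1) * g (y / m)) / 2 ^ α - g ((x + y) / 2) := by
  have hmid : 1 / 2 * x + m * (1 - 1 / 2) * (y / m) = (x + y) / 2 := by
    field_simp; ring
  have hhalf : (1 / 2 : ℝ) ^ α = (2 ^ α)⁻¹ := by
    rw [one_div, Real.inv_rpow zero_le_two]
  have hcomb : ∀ h : ℝ → ℝ, (h x + m * (2 ^ α - 1) * h (y / m)) / 2 ^ α =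
      (2 ^ α)⁻¹ * h x + m * (1 - (2 ^ α)⁻¹) * h (y / m) := by
    have : (2 : ℝ) ^ α ≠ 0 := (Real.rpow_pos_of_pos two_pos α).ne'
    intro h; field_simp
  have key := hf x hx (y / m) (div_nonneg hy hm.le) (1 / 2) ⟨by norm_num, by norm_num⟩
  rwa [hmid, hhalf, ← hcomb f, ← hcomb g] at key

lemma IntervalIntegrable.comp_div_right {h : ℝ → ℝ} {a b m : ℝ}
    (hh : IntervalIntegrable h volume (a / m) (b / m)) (hm : m ≠ 0) :
    IntervalIntegrable (fun x => h (x / m)) volume a b := by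
  simpa [div_eq_mul_inv, hm] using hh.comp_mul_right (c := m⁻¹)

lemma IntervalIntegrable.comp_reflect {ψ : ℝ → ℝ} {a b : ℝ}
    (hψ : IntervalIntegrable ψ volume a b) :
    IntervalIntegrable (fun x => ψ (a + b - x)) volume a b := by
  simpa using (hψ.comp_sub_left (a + b)).symm

lemma intervalIntegral.integral_add_mul_comp_reflect {φ ψ : ℝ → ℝ} {a b : ℝ} (K P : ℝ)
    (hφ : IntervalIntegrable φ volume a b) (hψ : IntervalIntegrable ψ volume a b) :
    ∫ x in a..b, (φ x + K * ψ (a + b - x)) / P = ∫ x in a..b, (φ x + K * ψ x) / P := by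
  have hreflect : ∫ x in a..b, ψ (a + b - x) = ∫ x in a..b, ψ x := by
    simp [integral_comp_sub_left ψ (a + b)]
  rw [integral_div, integral_div, integral_add hφ (hψ.comp_reflect.const_mul K),
    integral_add hφ (hψ.const_mul K), integral_const_mul, integral_const_mul, hreflect]

lemma abs_average_sub_le_of_abs_sub_le {F G : ℝ → ℝ} {a b u v : ℝ} (hab : a < b)
    (hF : IntervalIntegrable F volume a b) (hG : IntervalIntegrable G volume a b)
    (h : ∀ x ∈ Icc a b, |F x - u| ≤ G x - v) :
    |(1 / (b - a) * ∫ x in a..b, F x) - u| ≤ (1 / (b - a) * ∫ x in a..b, G x) - v := by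
  have hba : 0 < b - a := sub_pos.mpr hab
  have havg : ∀ (H : ℝ → ℝ) (w : ℝ), IntervalIntegrable H volume a b →
      (1 / (b - a) * ∫ x in a..b, H x) - w = 1 / (b - a) * ∫ x in a..b, (H x - w) := by
    intro H w hH
    rw [intervalIntegral.integral_sub hH intervalIntegrable_const,
      intervalIntegral.integral_const, smul_eq_mul]
    field_simp
  rw [havg F u hF, havg G v hG, abs_mul, abs_of_pos (one_div_pos.mpr hba)]
  gcongr
  calc |∫ x in a..b, (F x - u)| ≤ ∫ x in a..b, |F x - u| :=
        intervalIntegral.abs_integral_le_integral_abs hab.le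
    _ ≤ ∫ x in a..b, (G x - v) :=
        intervalIntegral.integral_mono_on hab.le (hF.sub intervalIntegrable_const).abs
          (hG.sub intervalIntegrable_const) h

theorem dominated_hh_first_general (f g : ℝ → ℝ) (α m a b : ℝ)
    (hm : m ∈ Set.Ioc (0:ℝ) 1)
    (hf : AMDominated α m g f)
    (ha : 0 ≤ a) (hab : a < b)
    (hfint : IntervalIntegrable f MeasureTheory.volume a b)
    (hgint : IntervalIntegrable g MeasureTheory.volume a b)
    (hfint' : IntervalIntegrable f MeasureTheory.volume (a / m) (b / m))
    (hgint' : IntervalIntegrable g MeasureTheory.volume (a / m) (b / m)) :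
    |(1 / (b - a)) * (∫ x in a..b, (f x + m * ((2:ℝ) ^ α - 1) * f (x / m)) / (2:ℝ) ^ α)
        - f ((a + b) / 2)| ≤
      (1 / (b - a)) * (∫ x in a..b, (g x + m * ((2:ℝ) ^ α - 1) * g (x / m)) / (2:ℝ) ^ α)
        - g ((a + b) / 2) := by
  have hfm := hfint'.comp_div_right hm.1.ne'
  have hgm := hgint'.comp_div_right hm.1.ne'
  rw [← intervalIntegral.integral_add_mul_comp_reflect _ _ hfint hfm,
    ← intervalIntegral.integral_add_mul_comp_reflect _ _ hgint hgm]
  refine abs_average_sub_le_of_abs_sub_le hab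
    ((hfint.add (hfm.comp_reflect.const_mul _)).div_const _)
    ((hgint.add (hgm.comp_reflect.const_mul _)).div_const _) fun x hx => ?_
  have hx0 : 0 ≤ x := ha.trans hx.1
  have hy0 : 0 ≤ a + b - x := by linarith [hx.2]
  simpa using hf.abs_midpoint_sub_le hm.1 hx0 hy0

theorem dominated_hh_first (f g : ℝ → ℝ) (α m a b : ℝ)
    (hα : α ∈ Set.Ioc (0:ℝ) 1) (hm : m ∈ Set.Ioc (0:ℝ) 1)
    (hg : AMConvex α m g) (hf : AMDominated α m g f)
    (ha : 0 ≤ a) (hab : a < b)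
    (hfint : IntervalIntegrable f MeasureTheory.volume a b)
    (hgint : IntervalIntegrable g MeasureTheory.volume a b)
    (hfint' : IntervalIntegrable f MeasureTheory.volume (a / m) (b / m))
    (hgint' : IntervalIntegrable g MeasureTheory.volume (a / m) (b / m)) :
    |(1 / (b - a)) * (∫ x in a..b, (f x + m * ((2:ℝ) ^ α - 1) * f (x / m)) / (2:ℝ) ^ α)
        - f ((a + b) / 2)| ≤
      (1 / (b - a)) * (∫ x in a..b, (g x + m * ((2:ℝ) ^ α - 1) * g (x / m)) / (2:ℝ) ^ α)
        - g ((a + b) / 2) :=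
  dominated_hh_first_general f g α m a b hm hf ha hab hfint hgint hfint' hgint'
end

section
/- Let g : [0,∞) → ℝ be (α,m)-convex with (α,m) ∈ (0,1]², let f : [0,∞) → ℝ be (g-(α,m))-convex dominated, and let 0 ≤ a < b with f, g integrable on the relevant intervals. Then |(1/2)[(f(a) + m f(a/m))/(α+1) + mα (f(b/m) + m f(b/m²))/(α+1)] − (1/(b-a)) ∫_a^b (f(x) + m f(x/m))/2 dx| ≤ (1/2)[(g(a) + m g(a/m))/(α+1) + mα (g(b/m) + m g(b/m²))/(α+1)] − (1/(b-a)) ∫_a^b (g(x) + m g(x/m))/2 dx. -/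
/-! The substitution `x = t a + (1 - t) b` turns the quantity inside the absolute value into
`∫₀¹ ½ (D_f(a, b/m, t) + m D_f(a/m, b/m², t)) dt`, where
`D_h(x, y, t) = t^α h(x) + m (1 - t^α) h(y) - h(t x + m (1 - t) y)` is the defect of the
`(α,m)`-convexity inequality. Domination says exactly `|D_f| ≤ D_g`, so the bound follows by
integrating pointwise. -/

open MeasureTheory intervalIntegral

lemma IntervalIntegrable.comp_add_sub_mul {h : ℝ → ℝ} {u v : ℝ}
    (hh : IntervalIntegrable h volume u v) :
    IntervalIntegrable (fun t => h (v + (u - v) * t)) volume 0 1 := by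
  rcases eq_or_ne u v with rfl | hne
  · simp
  · have := (hh.comp_add_left v).comp_mul_left (c := u - v)
    simpa [div_self (sub_ne_zero.2 hne)] using this.symm

lemma integral_comp_add_sub_mul (h : ℝ → ℝ) {u v : ℝ} (hne : u ≠ v) :
    ∫ t in (0:ℝ)..1, h (v + (u - v) * t) = (v - u)⁻¹ * ∫ x in u..v, h x := by
  rw [integral_comp_add_mul h (sub_ne_zero.2 hne), integral_symm, smul_eq_mul]
  simp only [mul_zero, add_zero, mul_one, add_sub_cancel]
  rw [← neg_sub v u, inv_neg]
  ring

noncomputable def amDefect (α m : ℝ) (h : ℝ → ℝ) (x y t : ℝ) : ℝ :=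
  t ^ α * h x + m * (1 - t ^ α) * h y - h (t * x + m * (1 - t) * y)

noncomputable def hermiteHadamardGap (α m a b : ℝ) (h : ℝ → ℝ) : ℝ :=
  (1 / 2) * ((h a + m * h (a / m)) / (α + 1)
      + m * α * ((h (b / m) + m * h (b / m ^ 2)) / (α + 1)))
    - (1 / (b - a)) * ∫ x in a..b, (h x + m * h (x / m)) / 2

section amDefect

variable {α m : ℝ} {h : ℝ → ℝ} {x y a b : ℝ}

lemma AMDominated.abs_amDefect_le {g f : ℝ → ℝ} (hf : AMDominated α m g f) {t : ℝ}
    (hx : 0 ≤ x) (hy : 0 ≤ y) (ht : t ∈ Set.Icc (0:ℝ) 1) :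
    |amDefect α m f x y t| ≤ amDefect α m g x y t :=
  hf x hx y hy t ht

lemma amDefect_div (c t : ℝ) :
    amDefect α m h (x / c) (y / c) t = amDefect α m (fun u => h (u / c)) x y t := by
  simp only [amDefect]
  ring_nf

lemma amDefect_eq (t : ℝ) :
    amDefect α m h x y t = t ^ α * (h x - m * h y) + m * h y - h (m * y + (x - m * y) * t) := by
  simp only [amDefect]
  ring_nf

lemma intervalIntegrable_amDefect (hα : -1 < α) (hh : IntervalIntegrable h volume x (m * y)) :
    IntervalIntegrable (amDefect α m h x y) volume 0 1 := by
  simp_rw [funext amDefect_eq]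
  exact (((intervalIntegrable_rpow' hα).mul_const _).add intervalIntegrable_const).sub
    hh.comp_add_sub_mul

lemma integral_amDefect (hα : -1 < α) (hne : x ≠ m * y)
    (hh : IntervalIntegrable h volume x (m * y)) :
    ∫ t in (0:ℝ)..1, amDefect α m h x y t
      = (h x + m * α * h y) / (α + 1) - (m * y - x)⁻¹ * ∫ u in x..m * y, h u := by
  have hpow := (intervalIntegrable_rpow' (a := 0) (b := 1) hα).mul_const (h x - m * h y)
  have hα₁ : α + 1 ≠ 0 := by linarith
  simp_rw [amDefect_eq]
  rw [integral_sub (hpow.add intervalIntegrable_const) hh.comp_add_sub_mul,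
    integral_add hpow intervalIntegrable_const, intervalIntegral.integral_mul_const,
    integral_rpow (Or.inl hα), intervalIntegral.integral_const, integral_comp_add_sub_mul h hne,
    Real.one_rpow, Real.zero_rpow hα₁, smul_eq_mul]
  field_simp
  ring

lemma intervalIntegrable_amDefect_div (hα : -1 < α) (hm : m ≠ 0)
    (hh : IntervalIntegrable h volume a b) :
    IntervalIntegrable (amDefect α m h a (b / m)) volume 0 1 :=
  intervalIntegrable_amDefect hα (by rwa [mul_div_cancel₀ b hm])

lemma hermiteHadamardGap_eq_integral (hα : -1 < α) (hm : m ≠ 0)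
    (hab : a ≠ b) (hh : IntervalIntegrable h volume a b)
    (hh' : IntervalIntegrable (fun x => h (x / m)) volume a b) :
    hermiteHadamardGap α m a b h = ∫ t in (0:ℝ)..1,
      (amDefect α m h a (b / m) t + m * amDefect α m (fun u => h (u / m)) a (b / m) t) / 2 := by
  have hb : m * (b / m) = b := mul_div_cancel₀ b hm
  have hne : a ≠ m * (b / m) := by rwa [hb]
  rw [intervalIntegral.integral_div, integral_add (intervalIntegrable_amDefect_div hα hm hh)
      ((intervalIntegrable_amDefect_div hα hm hh').const_mul m), intervalIntegral.integral_const_mul,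
    integral_amDefect hα hne (by rwa [hb]), integral_amDefect hα hne (by rwa [hb]), hb,
    hermiteHadamardGap, intervalIntegral.integral_div, integral_add hh (hh'.const_mul m),
    intervalIntegral.integral_const_mul, sq, ← div_div]
  ring

end amDefect

theorem dominated_hh_second_general (f g : ℝ → ℝ) (α m a b : ℝ)
    (hα : α ∈ Set.Ioc (0:ℝ) 1) (hm : m ∈ Set.Ioc (0:ℝ) 1)
    (hf : AMDominated α m g f)
    (ha : 0 ≤ a) (hab : a < b)
    (hfint : IntervalIntegrable f MeasureTheory.volume a b)
    (hgint : IntervalIntegrable g MeasureTheory.volume a b)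
    (hfint' : IntervalIntegrable (fun x => f (x / m)) MeasureTheory.volume a b)
    (hgint' : IntervalIntegrable (fun x => g (x / m)) MeasureTheory.volume a b) :
    |(1 / 2) * ((f a + m * f (a / m)) / (α + 1)
          + m * α * ((f (b / m) + m * f (b / m ^ 2)) / (α + 1)))
        - (1 / (b - a)) * ∫ x in a..b, (f x + m * f (x / m)) / 2| ≤
      (1 / 2) * ((g a + m * g (a / m)) / (α + 1)
          + m * α * ((g (b / m) + m * g (b / m ^ 2)) / (α + 1)))
        - (1 / (b - a)) * ∫ x in a..b, (g x + m * g (x / m)) / 2 := by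
  have hα' : -1 < α := by linarith [hα.1]
  have hm₀ : 0 < m := hm.1
  change |hermiteHadamardGap α m a b f| ≤ hermiteHadamardGap α m a b g
  rw [hermiteHadamardGap_eq_integral hα' hm₀.ne' hab.ne hfint hfint',
    hermiteHadamardGap_eq_integral hα' hm₀.ne' hab.ne hgint hgint', ← Real.norm_eq_abs]
  refine norm_integral_le_of_norm_le zero_le_one (ae_of_all _ fun t ht => ?_)
    (((intervalIntegrable_amDefect_div hα' hm₀.ne' hgint).add
      ((intervalIntegrable_amDefect_div hα' hm₀.ne' hgint').const_mul m)).div_const 2)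
  have ht' : t ∈ Set.Icc (0:ℝ) 1 := Set.Ioc_subset_Icc_self ht
  have hb : 0 ≤ b := ha.trans hab.le
  have h₁ := hf.abs_amDefect_le ha (by positivity : 0 ≤ b / m) ht'
  have h₂ := hf.abs_amDefect_le (by positivity : 0 ≤ a / m) (by positivity : 0 ≤ b / m / m) ht'
  rw [amDefect_div, amDefect_div] at h₂
  rw [abs_le] at h₁ h₂
  rw [Real.norm_eq_abs, abs_le]
  constructor <;> nlinarith

theorem dominated_hh_second (f g : ℝ → ℝ) (α m a b : ℝ)
    (hα : α ∈ Set.Ioc (0:ℝ) 1) (hm : m ∈ Set.Ioc (0:ℝ) 1)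
    (hg : AMConvex α m g) (hf : AMDominated α m g f)
    (ha : 0 ≤ a) (hab : a < b)
    (hfint : IntervalIntegrable f MeasureTheory.volume a b)
    (hgint : IntervalIntegrable g MeasureTheory.volume a b)
    (hfint' : IntervalIntegrable (fun x => f (x / m)) MeasureTheory.volume a b)
    (hgint' : IntervalIntegrable (fun x => g (x / m)) MeasureTheory.volume a b) :
    |(1 / 2) * ((f a + m * f (a / m)) / (α + 1)
          + m * α * ((f (b / m) + m * f (b / m ^ 2)) / (α + 1)))
        - (1 / (b - a)) * ∫ x in a..b, (f x + m * f (x / m)) / 2| ≤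
      (1 / 2) * ((g a + m * g (a / m)) / (α + 1)
          + m * α * ((g (b / m) + m * g (b / m ^ 2)) / (α + 1)))
        - (1 / (b - a)) * ∫ x in a..b, (g x + m * g (x / m)) / 2 :=
  dominated_hh_second_general f g α m a b hα hm hf ha hab hfint hgint hfint' hgint'
end
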